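/- Let H be a finite-dimensional complex inner product space and u, v ∈ H with ⟨u, v⟩ = 0. Then for every positive integer D: ‖(u+v)^{⊗D} − u^{⊗D}‖ ≤ √D · ‖v‖ · (‖u‖² + ‖v‖²)^{(D−1)/2}, where the norm on the left is taken in the D-fold tensor power H^{⊗D}. -/

import Mathlib

open scoped TensorProduct BigOperators

/-- Coordinate functional of the `D`-fold tensor power `H^{⊗D}` with respect to the basis
tensors built from an orthonormal basis `b` of `H`: on elementary tensors,
`tpCoord b m (u_1 ⊗ ⋯ ⊗ u_D) = ∏ i, ⟨b (m i), u i⟩`. -/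
noncomputable def tpCoord {H : Type*} [NormedAddCommGroup H] [InnerProductSpace ℂ H]
    {ι : Type*} [Fintype ι] [DecidableEq ι] (b : OrthonormalBasis ι ℂ H) {D : ℕ}
    (m : Fin D → ι) : (⨂[ℂ] _ : Fin D, H) →ₗ[ℂ] ℂ :=
  PiTensorProduct.lift
    ((MultilinearMap.mkPiAlgebra ℂ (Fin D) ℂ).compLinearMap fun i => b.toBasis.coord (m i))

/-- The inner product of the `D`-fold tensor power `H^{⊗D}`, expressed in coordinates with
respect to an orthonormal basis `b` of `H`.  It is the unique inner product determined on
elementary tensors by `⟨u_1 ⊗ ⋯ ⊗ u_D, w_1 ⊗ ⋯ ⊗ w_D⟩ = ∏ i, ⟨u_i, w_i⟩`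
(conjugate-linear in the first argument). -/
noncomputable def tpInner {H : Type*} [NormedAddCommGroup H] [InnerProductSpace ℂ H]
    {ι : Type*} [Fintype ι] [DecidableEq ι] (b : OrthonormalBasis ι ℂ H) {D : ℕ}
    (x y : ⨂[ℂ] _ : Fin D, H) : ℂ :=
  ∑ m : Fin D → ι, (starRingEnd ℂ) (tpCoord b m x) * tpCoord b m y

/-- The Hilbert norm of the `D`-fold tensor power `H^{⊗D}` induced by `tpInner`. -/
noncomputable def tpNorm {H : Type*} [NormedAddCommGroup H] [InnerProductSpace ℂ H]
    {ι : Type*} [Fintype ι] [DecidableEq ι] (b : OrthonormalBasis ι ℂ H) {D : ℕ}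
    (x : ⨂[ℂ] _ : Fin D, H) : ℝ :=
  Real.sqrt (tpInner b x x).re

/-! The difference `(u+v)^{⊗D} - u^{⊗D}` telescopes into the `D` elementary tensors
`t_k = (u+v)^{⊗k} ⊗ v ⊗ u^{⊗(D-k-1)}`. For `k < l` the factors of `t_k` and `t_l` in position `l`
are `u` and `v`, so `⟨u, v⟩ = 0` makes the `t_k` pairwise orthogonal. Every factor of `t_k` has
squared norm at most `‖u‖² + ‖v‖²` (Pythagoras for `u + v`), and the factor in position `k` is `v`,
so `‖t_k‖² ≤ ‖v‖² (‖u‖² + ‖v‖²)^{D-1}`; Pythagoras in `H^{⊗D}` gives `D` times this bound for the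
squared norm of the sum. -/

/-- The factors of `(x+y)^{⊗k} ⊗ y ⊗ x^{⊗(n-k-1)}`. -/
def telescopeTerm {M : Type*} [Add M] {n : ℕ} (x y : M) (k : ℕ) (i : Fin n) : M :=
  if (i : ℕ) < k then x + y else if (i : ℕ) = k then y else x

section telescopeTerm

variable {M : Type*} [Add M] {n : ℕ} (x y : M) {k : ℕ} {i : Fin n}

@[simp] lemma telescopeTerm_of_eq (h : (i : ℕ) = k) : telescopeTerm x y k i = y := by
  simp [telescopeTerm, h]

@[simp] lemma telescopeTerm_of_gt (h : k < i) : telescopeTerm x y k i = x := by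
  simp [telescopeTerm, lt_asymm h, h.ne']

end telescopeTerm

theorem MultilinearMap.map_const_add_sub_map_const {R M N : Type*} [CommSemiring R]
    [AddCommMonoid M] [Module R M] [AddCommGroup N] [Module R N] {n : ℕ}
    (f : MultilinearMap R (fun _ : Fin n => M) N) (x y : M) :
    f (fun _ => x + y) - f (fun _ => x) = ∑ k ∈ Finset.range n, f (telescopeTerm x y k) := by
  let partialPower (k : ℕ) (i : Fin n) : M := if (i : ℕ) < k then x + y else x
  have step : ∀ k < n, f (partialPower (k + 1)) - f (partialPower k) = f (telescopeTerm x y k) := by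
    intro k hk
    have next_eq : Function.update (partialPower k) ⟨k, hk⟩ (x + y) = partialPower (k + 1) := by
      ext i
      simp only [Function.update_apply, Fin.ext_iff, partialPower]
      split_ifs <;> first | rfl | omega
    have same_eq : Function.update (partialPower k) ⟨k, hk⟩ x = partialPower k := by
      ext i
      simp only [Function.update_apply, Fin.ext_iff, partialPower]
      split_ifs <;> first | rfl | omega
    have term_eq : Function.update (partialPower k) ⟨k, hk⟩ y = telescopeTerm x y k := by
      ext i
      simp only [Function.update_apply, Fin.ext_iff, partialPower, telescopeTerm]
      split_ifs <;> first | rfl | omega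
    have h := f.map_update_add (partialPower k) ⟨k, hk⟩ x y
    rwa [next_eq, same_eq, term_eq, ← sub_eq_iff_eq_add'] at h
  rw [← Finset.sum_congr rfl fun k hk => step k (Finset.mem_range.mp hk),
    Finset.sum_range_sub (fun k => f (partialPower k))]
  have h0 : partialPower 0 = fun _ => x := by ext i; simp [partialPower]
  have hn : partialPower n = fun _ => x + y := by ext i; simp [partialPower]
  rw [h0, hn]

section TensorPower

variable {H : Type*} [NormedAddCommGroup H] [InnerProductSpace ℂ H]
    {ι : Type*} [Fintype ι] [DecidableEq ι] (b : OrthonormalBasis ι ℂ H) {D : ℕ}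
    {u v : H}

lemma tpCoord_tprod (m : Fin D → ι) (f : Fin D → H) :
    tpCoord b m (PiTensorProduct.tprod ℂ f) = ∏ i, (inner ℂ (b (m i)) (f i) : ℂ) := by
  simp [tpCoord, OrthonormalBasis.coe_toBasis_repr_apply, OrthonormalBasis.repr_apply_apply]

lemma tpInner_tprod (f g : Fin D → H) :
    tpInner b (PiTensorProduct.tprod ℂ f) (PiTensorProduct.tprod ℂ g)
      = ∏ i, (inner ℂ (f i) (g i) : ℂ) := by
  simp only [tpInner, tpCoord_tprod, map_prod, ← Finset.prod_mul_distrib]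
  rw [← Fintype.piFinset_univ,
    ← Finset.prod_univ_sum (fun _ : Fin D => (Finset.univ : Finset ι))
      (fun i j => (starRingEnd ℂ) (inner ℂ (b j) (f i) : ℂ) * inner ℂ (b j) (g i))]
  congr 1; funext i
  simp_rw [← inner_conj_symm (f i)]
  simp [b.sum_inner_mul_inner]

lemma tpInner_tprod_self_re (f : Fin D → H) :
    (tpInner b (PiTensorProduct.tprod ℂ f) (PiTensorProduct.tprod ℂ f)).re = ∏ i, ‖f i‖ ^ 2 := by
  simp_rw [tpInner_tprod, inner_self_eq_norm_sq_to_K]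
  norm_cast

lemma tpInner_tprod_eq_zero {f g : Fin D → H} (i : Fin D) (h : inner ℂ (f i) (g i) = 0) :
    tpInner b (PiTensorProduct.tprod ℂ f) (PiTensorProduct.tprod ℂ g) = 0 := by
  rw [tpInner_tprod]
  exact Finset.prod_eq_zero (Finset.mem_univ i) h

lemma tpInner_sum_sum {α : Type*} (s t : Finset α) (c d : α → ⨂[ℂ] _ : Fin D, H) :
    tpInner b (∑ k ∈ s, c k) (∑ l ∈ t, d l) = ∑ k ∈ s, ∑ l ∈ t, tpInner b (c k) (d l) := by
  simp only [tpInner, map_sum, Finset.mul_sum, Finset.sum_mul]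
  refine Finset.sum_comm.trans ?_
  exact (Finset.sum_congr rfl fun l _ => Finset.sum_comm).trans Finset.sum_comm

lemma tpInner_sum_self_of_pairwise {α : Type*} (s : Finset α) (c : α → ⨂[ℂ] _ : Fin D, H)
    (h : (s : Set α).Pairwise fun k l => tpInner b (c k) (c l) = 0) :
    tpInner b (∑ k ∈ s, c k) (∑ k ∈ s, c k) = ∑ k ∈ s, tpInner b (c k) (c k) := by
  rw [tpInner_sum_sum]
  exact Finset.sum_congr rfl fun k hk =>
    Finset.sum_eq_single_of_mem k hk fun l hl hlk => h hk hl hlk.symm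


lemma norm_telescopeTerm_sq_le (huv : inner ℂ u v = 0) (k : ℕ) (i : Fin D) :
    ‖telescopeTerm u v k i‖ ^ 2 ≤ ‖u‖ ^ 2 + ‖v‖ ^ 2 := by
  unfold telescopeTerm
  split_ifs
  · simp only [sq, norm_add_sq_eq_norm_sq_add_norm_sq_of_inner_eq_zero u v huv, le_refl]
  · exact le_add_of_nonneg_left (sq_nonneg _)
  · exact le_add_of_nonneg_right (sq_nonneg _)

lemma tpInner_telescopeTerm_eq_zero (huv : inner ℂ u v = 0) {k l : ℕ} (hk : k < D) (hl : l < D)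
    (hkl : k ≠ l) :
    tpInner b (PiTensorProduct.tprod ℂ (telescopeTerm (n := D) u v k))
      (PiTensorProduct.tprod ℂ (telescopeTerm (n := D) u v l)) = 0 := by
  rcases hkl.lt_or_gt with h | h
  · exact tpInner_tprod_eq_zero b ⟨l, hl⟩ (by simp [h, huv])
  · exact tpInner_tprod_eq_zero b ⟨k, hk⟩ (by simp [h, inner_eq_zero_symm.mp huv])

lemma tpInner_telescopeTerm_self_re_le (huv : inner ℂ u v = 0) {k : ℕ} (hk : k < D) :
    (tpInner b (PiTensorProduct.tprod ℂ (telescopeTerm (n := D) u v k))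
      (PiTensorProduct.tprod ℂ (telescopeTerm (n := D) u v k))).re
      ≤ ‖v‖ ^ 2 * (‖u‖ ^ 2 + ‖v‖ ^ 2) ^ (D - 1) := by
  rw [tpInner_tprod_self_re, ← Finset.mul_prod_erase _ _ (Finset.mem_univ ⟨k, hk⟩)]
  refine mul_le_mul (by simp) ?_ (by positivity) (by positivity)
  calc ∏ i ∈ Finset.univ.erase ⟨k, hk⟩, ‖telescopeTerm u v k i‖ ^ 2
      ≤ ∏ _i ∈ (Finset.univ : Finset (Fin D)).erase ⟨k, hk⟩, (‖u‖ ^ 2 + ‖v‖ ^ 2) :=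
        Finset.prod_le_prod (fun _ _ => by positivity) fun i _ => norm_telescopeTerm_sq_le huv k i
    _ = (‖u‖ ^ 2 + ‖v‖ ^ 2) ^ (D - 1) := by simp [Finset.card_erase_of_mem]

lemma tpInner_tprod_add_sub_tprod_re_le (huv : inner ℂ u v = 0) :
    (tpInner b ((PiTensorProduct.tprod ℂ fun _ : Fin D => u + v) -
        (PiTensorProduct.tprod ℂ fun _ : Fin D => u))
      ((PiTensorProduct.tprod ℂ fun _ : Fin D => u + v) -
        (PiTensorProduct.tprod ℂ fun _ : Fin D => u))).re
      ≤ D * (‖v‖ ^ 2 * (‖u‖ ^ 2 + ‖v‖ ^ 2) ^ (D - 1)) := by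
  rw [MultilinearMap.map_const_add_sub_map_const, tpInner_sum_self_of_pairwise, Complex.re_sum]
  · calc _ ≤ ∑ _k ∈ Finset.range D, ‖v‖ ^ 2 * (‖u‖ ^ 2 + ‖v‖ ^ 2) ^ (D - 1) :=
          Finset.sum_le_sum fun k hk =>
            tpInner_telescopeTerm_self_re_le b huv (Finset.mem_range.mp hk)
      _ = _ := by simp
  · intro k hk l hl hkl
    exact tpInner_telescopeTerm_eq_zero b huv (Finset.mem_range.mp hk) (Finset.mem_range.mp hl) hkl

end TensorPower

lemma Real.sqrt_natCast_mul_sq_mul_pow_pred (n : ℕ) {a s : ℝ} (ha : 0 ≤ a) (hs : 0 ≤ s) :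
    √(n * (a ^ 2 * s ^ (n - 1))) = √n * a * s ^ (((n : ℝ) - 1) / 2) := by
  rcases n.eq_zero_or_pos with rfl | hn
  · simp
  rw [Real.sqrt_mul (by positivity), Real.sqrt_mul (by positivity), Real.sqrt_sq ha,
    Real.sqrt_eq_rpow (s ^ _), ← Real.rpow_natCast, ← Real.rpow_mul hs, Nat.cast_sub hn,
    Nat.cast_one]
  ring_nf

theorem stmt6 {H : Type*} [NormedAddCommGroup H] [InnerProductSpace ℂ H]
    {ι : Type*} [Fintype ι] [DecidableEq ι]
    (b : OrthonormalBasis ι ℂ H) (u v : H) (huv : (inner ℂ u v : ℂ) = 0)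
    (D : ℕ) :
    tpNorm b ((PiTensorProduct.tprod ℂ fun _ : Fin D => u + v) -
        (PiTensorProduct.tprod ℂ fun _ : Fin D => u))
      ≤ Real.sqrt D * ‖v‖ * (‖u‖ ^ 2 + ‖v‖ ^ 2) ^ (((D : ℝ) - 1) / 2) := by
  rw [← Real.sqrt_natCast_mul_sq_mul_pow_pred D (norm_nonneg v) (by positivity)]
  exact Real.sqrt_le_sqrt (tpInner_tprod_add_sub_tprod_re_le b huv)
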